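/- Fix an action a in a finite action set A, distributions P : A → Δ(S), costs c : A → ℝ, margin ε ≥ 0 and parameter λ > 0. Define the ε-margin contract set X^a(ε) = { x : S → ℝ≥0 | (P(a) − P(a'))·x ≥ c(a) − c(a') + ε for all a' ≠ a } and the least-payment ζ(a) = min_{x ∈ X^a(0)} P(a)·x. Suppose there exists e ∈ {0,1}^S with (P(a) − P(a'))·e ≥ λ for all a' ≠ a, and that X^a(0) is nonempty with the minimum attained. Then 0 ≤ min_{x ∈ X^a(ε)} P(a)·x − ζ(a) ≤ ε/λ. -/
import Mathlib


theorem stmt2 {A S : Type*} [Fintype A] [Fintype S]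
    (P : A → S → ℝ) (hP0 : ∀ a s, 0 ≤ P a s) (hP1 : ∀ a, ∑ s, P a s = 1)
    (c : A → ℝ) (a : A) (ε lam : ℝ) (hε : 0 ≤ ε) (hlam : 0 < lam)
    (X : ℝ → Set (S → ℝ))
    (hX : ∀ δ, X δ = {x | (∀ s, 0 ≤ x s) ∧
      ∀ a' : A, a' ≠ a → c a - c a' + δ ≤ ∑ s, (P a s - P a' s) * x s})
    (e : S → ℝ) (he : ∀ s, e s = 0 ∨ e s = 1)
    (hind : ∀ a' : A, a' ≠ a → lam ≤ ∑ s, (P a s - P a' s) * e s)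
    (x0 : S → ℝ) (hx0 : x0 ∈ X 0)
    (hmin : ∀ y ∈ X 0, ∑ s, P a s * x0 s ≤ ∑ s, P a s * y s) :
    0 ≤ sInf ((fun x => ∑ s, P a s * x s) '' (X ε)) - ∑ s, P a s * x0 s ∧
      sInf ((fun x => ∑ s, P a s * x s) '' (X ε)) - ∑ s, P a s * x0 s ≤ ε / lam := by
  -- X ε ⊆ X 0
  have hsub : X ε ⊆ X 0 := by
    intro y hy
    rw [hX] at hy ⊢
    exact ⟨hy.1, fun a' ha' => le_trans (by linarith) (hy.2 a' ha')⟩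
  -- shifted contract
  set x1 : S → ℝ := fun s => x0 s + (ε / lam) * e s with hx1def
  have hεlam : 0 ≤ ε / lam := div_nonneg hε hlam.le
  have hx0' := hx0
  rw [hX] at hx0'
  have hx1 : x1 ∈ X ε := by
    rw [hX]
    constructor
    · intro s
      have : 0 ≤ e s := by rcases he s with h | h <;> simp [h]
      have := hx0'.1 s
      positivity
    · intro a' ha'
      have h1 := hx0'.2 a' ha'
      have h2 := hind a' ha'
      have : ∑ s, (P a s - P a' s) * x1 s
          = (∑ s, (P a s - P a' s) * x0 s) + (ε / lam) * ∑ s, (P a s - P a' s) * e s := by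
        rw [Finset.mul_sum, ← Finset.sum_add_distrib]
        congr 1; ext s; ring
      rw [this]
      have h3 : ε / lam * lam = ε := div_mul_cancel₀ ε hlam.ne'
      nlinarith [mul_le_mul_of_nonneg_left h2 hεlam]
  have hx1pay : ∑ s, P a s * x1 s ≤ ∑ s, P a s * x0 s + ε / lam := by
    have hsum : ∑ s, P a s * x1 s
        = (∑ s, P a s * x0 s) + (ε / lam) * ∑ s, P a s * e s := by
      rw [Finset.mul_sum, ← Finset.sum_add_distrib]
      congr 1; ext s; ring
    have hee : ∑ s, P a s * e s ≤ 1 := by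
      rw [← hP1 a]
      apply Finset.sum_le_sum
      intro s _
      rcases he s with h | h <;> simp [h, hP0 a s]
    rw [hsum]
    nlinarith [mul_le_mul_of_nonneg_left hee hεlam]
  have hne : ((fun x => ∑ s, P a s * x s) '' (X ε)).Nonempty := ⟨_, ⟨x1, hx1, rfl⟩⟩
  have hbdd : ∀ z ∈ (fun x => ∑ s, P a s * x s) '' (X ε), ∑ s, P a s * x0 s ≤ z := by
    rintro z ⟨y, hy, rfl⟩
    exact hmin y (hsub hy)
  have hbb : BddBelow ((fun x => ∑ s, P a s * x s) '' (X ε)) := ⟨_, hbdd⟩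
  constructor
  · have := le_csInf hne hbdd
    linarith
  · have := csInf_le hbb ⟨x1, hx1, rfl⟩
    linarith
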